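/- For nonnegative integers m, n and any integer k, the poly-Bernoulli polynomial value B_m^{(k)}(n) equals \sum_{q=1}^{m+1} \sum_{i=0}^{n} (-1)^{m+n+q-i-1} ((q-1)!/q^k) [n choose_1 i] {m+i choose_2 n+q-1}. -/

import Mathlib

open PowerSeries Finset

/-- Unsigned Stirling numbers of the first kind. -/
def stirling1 : ℕ → ℕ → ℕ
  | 0, 0 => 1
  | 0, _ + 1 => 0
  | _ + 1, 0 => 0
  | n + 1, m + 1 => stirling1 n m + n * stirling1 n (m + 1)

/-- Stirling numbers of the second kind. -/
def stirling2 : ℕ → ℕ → ℕ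
  | 0, 0 => 1
  | 0, _ + 1 => 0
  | _ + 1, 0 => 0
  | n + 1, m + 1 => stirling2 n m + (m + 1) * stirling2 n (m + 1)

/-- e^t as a formal power series over ℚ. -/
noncomputable def expQ : PowerSeries ℚ := PowerSeries.exp ℚ

/-- e^{-t} as a formal power series over ℚ. -/
noncomputable def expNegQ : PowerSeries ℚ := rescale (-1) expQ

/-- The formal power series Li_k(1-e^{-t})/(1-e^{-t}) = ∑_{m≥0} (m+1)^{-k} (1-e^{-t})^m,
  defined coefficientwise (the tail vanishes since (1-e^{-t})^m has order m). -/
noncomputable def liEGF (k : ℤ) : PowerSeries ℚ :=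
  PowerSeries.mk fun j =>
    ∑ m ∈ range (j + 1), ((m : ℚ) + 1) ^ (-k) * coeff j ((1 - expNegQ) ^ m)

/-- EGF of the poly-Bernoulli polynomials: e^{-xt} Li_k(1-e^{-t})/(1-e^{-t}). -/
noncomputable def pbEGF (k : ℤ) (x : ℚ) : PowerSeries ℚ := rescale (-x) expQ * liEGF k

/-- Poly-Bernoulli polynomial value B_m^{(k)}(x). -/
noncomputable def pbPoly (k : ℤ) (x : ℚ) (m : ℕ) : ℚ := m.factorial * coeff m (pbEGF k x)

/-- Poly-Bernoulli number B_m^{(k)}. -/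
noncomputable def pbB (k : ℤ) (m : ℕ) : ℚ := pbPoly k 0 m

/-- Poly-Bernoulli number C_m^{(k)}. -/
noncomputable def pbC (k : ℤ) (m : ℕ) : ℚ := pbPoly k 1 m

/-- 𝓑_m^{(-l)}(n) = ∑_{j=0}^n [n j] B_m^{(-l-j)}(n). -/
noncomputable def scrB (l m n : ℕ) : ℚ :=
  ∑ j ∈ range (n + 1), (stirling1 n j : ℚ) * pbPoly (-(l : ℤ) - j) n m

/-!
Expanding `Li_k(1 - e^{-t}) / (1 - e^{-t}) = ∑_q (q+1)^{-k} (1 - e^{-t})^q` by the binomial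
theorem gives `B_m^{(k)}(n) = ∑_q (q+1)^{-k} ∑_{r ≤ q} (-1)^r C(q,r) (-n-r)^m`, so for each `q` the
sum over `i` has to equal `∑_{r ≤ q} (-1)^r C(q,r) (-n-r)^m`. Insert
`p! {N p} = ∑_j (-1)^{p-j} C(p,j) j^N` with `p = n + q` (the `p`-th forward difference of `x^N`
at `0`, read off from `x^N = ∑_s {N s} s! C(x,s)`). The sum over `i` then collapses, by
`∑_i [n i] x^i = x(x+1)⋯(x+n-1)` at `x = -j`, to `(-1)^n j(j-1)⋯(j-n+1)`; this kills the terms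
`j < n`, and the term `j = n + r` gives the `r`-th summand.
-/

namespace Nat

theorem coeff_ascPochhammer_eq_stirlingFirst (n k : ℕ) :
    (ascPochhammer ℕ n).coeff k = stirlingFirst n k := by
  induction n generalizing k with
  | zero => cases k <;> simp [Polynomial.coeff_one]
  | succ n ih =>
    rw [ascPochhammer_succ_right, mul_add, ← Polynomial.C_eq_natCast, Polynomial.coeff_add,
      Polynomial.coeff_mul_C]
    cases k with
    | zero => rcases n with _ | n <;> simp [Polynomial.coeff_zero_eq_eval_zero]
    | succ k => simp [Polynomial.coeff_mul_X, ih, stirlingFirst_succ_succ, add_comm, mul_comm]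

theorem sum_stirlingFirst_mul_pow {R : Type*} [CommSemiring R] (n : ℕ) (x : R) :
    ∑ i ∈ range (n + 1), (stirlingFirst n i : R) * x ^ i = (ascPochhammer R n).eval x := by
  rw [← ascPochhammer_map (Nat.castRingHom R), Polynomial.eval_map,
    Polynomial.eval₂_eq_sum_range, ascPochhammer_natDegree]
  simp [coeff_ascPochhammer_eq_stirlingFirst]

open Polynomial in
theorem pow_eq_sum_stirlingSecond_mul_descPochhammer (R : Type*) [CommRing R] (N : ℕ) :
    (X : R[X]) ^ N =
      ∑ s ∈ range (N + 1), (stirlingSecond N s : R[X]) * descPochhammer R s := by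
  induction N with
  | zero => simp
  | succ N ih =>
    have shift := sum_range_succ' (fun s ↦ (s * stirlingSecond N s : R[X]) * descPochhammer R s)
      (N + 1)
    rw [sum_range_succ, stirlingSecond_eq_zero_of_lt (lt_add_one N)] at shift
    simp only [cast_zero, mul_zero, zero_mul, add_zero] at shift
    calc (X : R[X]) ^ (N + 1)
        = ∑ s ∈ range (N + 1), ((stirlingSecond N s : R[X]) * descPochhammer R (s + 1) +
            (s * stirlingSecond N s : R[X]) * descPochhammer R s) := by
          rw [_root_.pow_succ', ih, mul_sum]
          exact sum_congr rfl fun s _ ↦ by rw [descPochhammer_succ_right]; ring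
      _ = ∑ s ∈ range (N + 1), (stirlingSecond (N + 1) (s + 1) : R[X]) *
            descPochhammer R (s + 1) := by
          rw [sum_add_distrib, shift, ← sum_add_distrib]
          simp only [stirlingSecond_succ_succ]
          push_cast
          exact sum_congr rfl fun s _ ↦ by ring
      _ = _ := by simp [sum_range_succ' _ (N + 1)]

theorem pow_eq_sum_stirlingSecond_mul_choose (N x : ℕ) :
    (x : ℤ) ^ N = ∑ s ∈ range (N + 1), (stirlingSecond N s * s ! : ℤ) * x.choose s := by
  have := congr_arg (Polynomial.eval (x : ℤ)) (pow_eq_sum_stirlingSecond_mul_descPochhammer ℤ N)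
  simpa [Polynomial.eval_finsetSum, descPochhammer_eval_eq_descFactorial,
    descFactorial_eq_factorial_mul_choose, mul_assoc] using this

theorem stirlingSecond_mul_factorial_eq_sum (N r : ℕ) :
    (stirlingSecond N r * r ! : ℤ) =
      ∑ j ∈ range (r + 1), (-1) ^ (r - j) * r.choose j * (j : ℤ) ^ N := by
  have hfun : (fun x : ℕ ↦ (x : ℤ) ^ N) =
      ∑ s ∈ range (N + 1), (stirlingSecond N s * s ! : ℤ) • fun x : ℕ ↦ (x.choose s : ℤ) := by
    ext x; simp [pow_eq_sum_stirlingSecond_mul_choose]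
  have hdiff := congr_fun (congr_arg (fwdDiff 1)^[r] hfun) 0
  rw [fwdDiff_iter_eq_sum_shift, fwdDiff_iter_finsetSum] at hdiff
  simp only [fwdDiff_iter_const_smul, Finset.sum_apply, Pi.smul_apply, fwdDiff_iter_choose_zero,
    smul_eq_mul, mul_ite, mul_one, mul_zero, sum_ite_eq, zero_add] at hdiff
  rw [hdiff]
  split_ifs with h
  · rfl
  · simp [stirlingSecond_eq_zero_of_lt (by simpa using h)]

theorem choose_mul_descFactorial_mul_factorial (n q r : ℕ) :
    (n + q).choose (n + r) * (n + r).descFactorial n * q ! = (n + q)! * q.choose r := by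
  have h := choose_mul (n := n + q) (le_add_right n r)
  simp only [Nat.add_sub_cancel_left] at h
  calc (n + q).choose (n + r) * (n + r).descFactorial n * q !
      = (n + q).choose (n + r) * (n + r).choose n * n ! * q ! := by
        rw [descFactorial_eq_factorial_mul_choose]; ring
    _ = (n + q)! * q.choose r := by
        rw [h, choose_symm_add, ← add_choose_mul_factorial_mul_factorial n q]; ring

theorem sum_stirlingFirst_mul_stirlingSecond_mul_factorial (m n p : ℕ) :
    ∑ i ∈ range (n + 1),
        (-1 : ℤ) ^ i * stirlingFirst n i * (stirlingSecond (m + i) p * p !) =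
      (-1) ^ n * ∑ j ∈ range (p + 1),
        (-1) ^ (p - j) * p.choose j * (j : ℤ) ^ m * j.descFactorial n := by
  calc ∑ i ∈ range (n + 1), (-1 : ℤ) ^ i * stirlingFirst n i * (stirlingSecond (m + i) p * p !)
      = ∑ i ∈ range (n + 1), ∑ j ∈ range (p + 1),
          (-1) ^ (p - j) * p.choose j * (j : ℤ) ^ m * (stirlingFirst n i * (-(j : ℤ)) ^ i) := by
        simp only [stirlingSecond_mul_factorial_eq_sum, mul_sum]
        exact sum_congr rfl fun i _ ↦ sum_congr rfl fun j _ ↦ by rw [neg_pow, pow_add]; ring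
    _ = ∑ j ∈ range (p + 1),
          (-1) ^ (p - j) * p.choose j * (j : ℤ) ^ m * ((-1) ^ n * j.descFactorial n) := by
        rw [sum_comm]
        refine sum_congr rfl fun j _ ↦ ?_
        rw [← mul_sum, sum_stirlingFirst_mul_pow, ascPochhammer_eval_neg_eq_descPochhammer,
          descPochhammer_eval_eq_descFactorial]
    _ = _ := by
        rw [mul_sum]
        exact sum_congr rfl fun j _ ↦ by ring

theorem sum_stirlingFirst_mul_stirlingSecond (m n q : ℕ) :
    ∑ i ∈ range (n + 1), (-1 : ℤ) ^ (m + n + q - i) * q ! * stirlingFirst n i *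
        stirlingSecond (m + i) (n + q) =
      ∑ r ∈ range (q + 1), (-1) ^ r * q.choose r * (-(n : ℤ) - r) ^ m := by
  refine mul_left_cancel₀ (cast_ne_zero.mpr (factorial_ne_zero (n + q))) ?_
  calc ((n + q)! : ℤ) * ∑ i ∈ range (n + 1), (-1 : ℤ) ^ (m + n + q - i) * q ! *
        stirlingFirst n i * stirlingSecond (m + i) (n + q)
      = (-1 : ℤ) ^ (m + n + q) * q ! * ∑ i ∈ range (n + 1),
          (-1 : ℤ) ^ i * stirlingFirst n i * (stirlingSecond (m + i) (n + q) * (n + q)!) := by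
        simp only [mul_sum]
        refine sum_congr rfl fun i hi ↦ ?_
        have hi : i ≤ m + n + q := by have := mem_range_succ_iff.mp hi; omega
        have hsign : (-1 : ℤ) ^ (m + n + q - i) = (-1) ^ (m + n + q) * (-1) ^ i := by
          rw [← pow_add]
          exact neg_one_pow_congr (by rw [Nat.even_sub hi, Nat.even_add (m := m + n + q)])
        rw [hsign]
        ring
    _ = (-1 : ℤ) ^ (m + n + q) * q ! * ((-1) ^ n * ∑ r ∈ range (q + 1),
          (-1 : ℤ) ^ (n + q - (n + r)) * (n + q).choose (n + r) * ((n + r : ℕ) : ℤ) ^ m *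
            (n + r).descFactorial n) := by
        have hvanish : ∑ j ∈ range n,
            (-1 : ℤ) ^ (n + q - j) * (n + q).choose j * (j : ℤ) ^ m * j.descFactorial n = 0 :=
          sum_eq_zero fun j hj ↦ by simp [descFactorial_eq_zero_iff_lt.mpr (mem_range.mp hj)]
        rw [sum_stirlingFirst_mul_stirlingSecond_mul_factorial,
          show n + q + 1 = n + (q + 1) from rfl, sum_range_add, hvanish, zero_add]
    _ = _ := by
        simp only [mul_sum]
        refine sum_congr rfl fun r hr ↦ ?_
        obtain ⟨d, rfl⟩ := exists_add_of_le (mem_range_succ_iff.mp hr)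
        have hnat := congr_arg (Nat.cast : ℕ → ℤ)
          (choose_mul_descFactorial_mul_factorial n (r + d) r)
        have hsub : n + (r + d) - (n + r) = d := by omega
        have hsign : (-1 : ℤ) ^ (m + n + (r + d)) * (-1) ^ n * (-1) ^ d =
            (-1) ^ r * (-1) ^ m := by
          rw [← pow_add, ← pow_add, show m + n + (r + d) + n + d = r + m + 2 * (n + d) by ring,
            pow_add, pow_mul]
          norm_num [pow_add]
        rw [hsub, show (-(n : ℤ) - r) ^ m = (-1) ^ m * (n + r) ^ m by rw [← mul_pow]; ring]
        push_cast at hnat ⊢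
        linear_combination ((n + r : ℤ) ^ m * (n + (r + d)).choose (n + r) *
          (n + r).descFactorial n * (r + d)!) * hsign +
            ((-1) ^ r * (-1) ^ m * (n + r : ℤ) ^ m) * hnat

end Nat

theorem stirling1_eq_stirlingFirst (n k : ℕ) : stirling1 n k = Nat.stirlingFirst n k := by
  induction n generalizing k with
  | zero => cases k <;> rfl
  | succ n ih => cases k <;> simp [stirling1, Nat.stirlingFirst, ih, add_comm]

theorem stirling2_eq_stirlingSecond (n k : ℕ) : stirling2 n k = Nat.stirlingSecond n k := by
  induction n generalizing k with
  | zero => cases k <;> rfl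
  | succ n ih => cases k <;> simp [stirling2, Nat.stirlingSecond, ih, add_comm]

theorem expNegQ_pow (r : ℕ) : expNegQ ^ r = rescale (-(r : ℚ)) expQ := by
  rw [expNegQ, ← map_pow, expQ, exp_pow_eq_rescale_exp, rescale_rescale, mul_neg_one]

theorem coeff_one_sub_expNegQ_pow_of_lt {b q : ℕ} (h : b < q) :
    coeff b ((1 - expNegQ) ^ q) = 0 := by
  have hX : X ∣ 1 - expNegQ := X_dvd_iff.mpr <| by
    simp [expNegQ, expQ, ← coeff_zero_eq_constantCoeff_apply, -coeff_zero_eq_constantCoeff]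
  exact X_pow_dvd_iff.mp (pow_dvd_pow_of_dvd hX q) b h

theorem coeff_mul_liEGF (f : PowerSeries ℚ) (k : ℤ) (m : ℕ) :
    coeff m (f * liEGF k) =
      ∑ q ∈ range (m + 1), ((q : ℚ) + 1) ^ (-k) * coeff m (f * (1 - expNegQ) ^ q) := by
  simp only [coeff_mul, mul_sum]
  rw [sum_comm]
  refine sum_congr rfl fun p hp ↦ ?_
  have hp : p.2 + 1 ≤ m + 1 := by have := mem_antidiagonal.mp hp; omega
  rw [liEGF, coeff_mk, mul_sum, ← sum_subset (range_subset_range.mpr hp)]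
  · exact sum_congr rfl fun q _ ↦ by ring
  · intro q _ hq
    rw [coeff_one_sub_expNegQ_pow_of_lt (by simpa using hq)]
    ring

theorem rescale_expQ_mul_one_sub_expNegQ_pow (c : ℚ) (q : ℕ) :
    rescale c expQ * (1 - expNegQ) ^ q =
      ∑ r ∈ range (q + 1), ((-1) ^ r * q.choose r : ℚ) • rescale (c - r) expQ := by
  rw [sub_eq_neg_add, add_pow, mul_sum]
  refine sum_congr rfl fun r _ ↦ ?_
  rw [neg_pow, expNegQ_pow, one_pow, mul_one, sub_eq_add_neg, expQ, ← exp_mul_exp_eq_exp_add,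
    smul_eq_C_mul]
  simp only [map_mul, map_pow, map_neg, map_one, map_natCast]
  ring

theorem factorial_mul_coeff_rescale_expQ_mul_one_sub_expNegQ_pow (c : ℚ) (q b : ℕ) :
    b.factorial * coeff b (rescale c expQ * (1 - expNegQ) ^ q) =
      ∑ r ∈ range (q + 1), (-1) ^ r * q.choose r * (c - r) ^ b := by
  rw [rescale_expQ_mul_one_sub_expNegQ_pow, map_sum, mul_sum]
  refine sum_congr rfl fun r _ ↦ ?_
  rw [coeff_smul, expQ, coeff_rescale, coeff_exp, Algebra.algebraMap_self, RingHom.id_apply,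
    smul_eq_mul]
  field_simp

/-- Closed formula for poly-Bernoulli polynomial values at nonnegative integers. -/
theorem pbPoly_eq_sum (m n : ℕ) (k : ℤ) :
    pbPoly k n m =
      ∑ q ∈ range (m + 1), ∑ i ∈ range (n + 1),
        (-1 : ℚ) ^ (m + n + q - i) * (q.factorial : ℚ) * ((q : ℚ) + 1) ^ (-k) *
          (stirling1 n i : ℚ) * (stirling2 (m + i) (n + q) : ℚ) := by
  rw [pbPoly, pbEGF, coeff_mul_liEGF, mul_sum]
  refine sum_congr rfl fun q _ ↦ ?_
  have hinner := congr_arg (Int.cast : ℤ → ℚ) (Nat.sum_stirlingFirst_mul_stirlingSecond m n q)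
  push_cast at hinner
  rw [mul_left_comm, factorial_mul_coeff_rescale_expQ_mul_one_sub_expNegQ_pow, ← hinner, mul_sum]
  refine sum_congr rfl fun i _ ↦ ?_
  rw [stirling1_eq_stirlingFirst, stirling2_eq_stirlingSecond]
  ring
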